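/- (Clique-count bound underlying the time complexity of HOLS.) Let G be a finite simple graph on n vertices admitting a linear ordering of its vertices in which every vertex has at most c neighbors that come later in the ordering (i.e., G has degeneracy at most c). Then for every k ≥ 1, the number of k-cliques of G is at most n · C(c, k−1), where C(c, k−1) is the binomial coefficient. -/
import Mathlib


/-- Clique-count bound underlying the time complexity of HOLS: If a finite
simple graph `G` on `n` vertices admits a linear ordering (injective `ord : V → ℕ`) in which
every vertex has at most `c` later neighbors (degeneracy at most `c`), then for every
`k ≥ 1` the number of `k`-cliques of `G` is at most `n · C(c, k−1)`. -/
theorem clique_count_degeneracy_bound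
    {V : Type*} [Fintype V] [DecidableEq V]
    (G : SimpleGraph V) [DecidableRel G.Adj]
    (n c : ℕ) (hn : Fintype.card V = n)
    (ord : V → ℕ) (hord : Function.Injective ord)
    (hdeg : ∀ v : V,
        (Finset.univ.filter (fun u => G.Adj v u ∧ ord v < ord u)).card ≤ c) :
    ∀ k : ℕ, 1 ≤ k → (G.cliqueFinset k).card ≤ n * Nat.choose c (k - 1) := by
  intro k hk
  rcases isEmpty_or_nonempty V with hE | hNE
  · have : G.cliqueFinset k = ∅ := by
      rw [Finset.eq_empty_iff_forall_notMem]
      intro s hs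
      rw [SimpleGraph.mem_cliqueFinset_iff] at hs
      have : s.Nonempty := by rw [← Finset.card_pos, hs.2]; omega
      exact (hE.false this.choose).elim
    simp [this]
  classical
  have : Inhabited V := Classical.inhabited_of_nonempty hNE
  set N : V → Finset V :=
    fun v => Finset.univ.filter (fun u => G.Adj v u ∧ ord v < ord u) with hN
  -- minimum-ord element of a finset
  have hmin : ∀ s : Finset V, s.Nonempty → ∃ m ∈ s, ∀ u ∈ s, ord m ≤ ord u := by
    intro s hs
    obtain ⟨m, hm, hmle⟩ := Finset.exists_min_image s ord hs
    exact ⟨m, hm, hmle⟩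
  set m : Finset V → V :=
    fun s => if h : s.Nonempty then (hmin s h).choose else default with hm
  have hmem : ∀ s : Finset V, s.Nonempty → m s ∈ s := by
    intro s h
    simp only [hm, dif_pos h]
    exact (hmin s h).choose_spec.1
  have hle : ∀ s : Finset V, (h : s.Nonempty) → ∀ u ∈ s, ord (m s) ≤ ord u := by
    intro s h
    simp only [hm, dif_pos h]
    exact (hmin s h).choose_spec.2
  set T : Finset (V × Finset V) :=
    Finset.univ.biUnion (fun v => ((N v).powersetCard (k-1)).image (fun t => (v, t))) with hT
  have hmap : ∀ s ∈ G.cliqueFinset k, (m s, s.erase (m s)) ∈ T := by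
    intro s hs
    rw [SimpleGraph.mem_cliqueFinset_iff] at hs
    have hsne : s.Nonempty := by
      rw [← Finset.card_pos, hs.2]; omega
    have hms := hmem s hsne
    rw [hT, Finset.mem_biUnion]
    refine ⟨m s, Finset.mem_univ _, Finset.mem_image.2 ⟨s.erase (m s), ?_, rfl⟩⟩
    rw [Finset.mem_powersetCard]
    constructor
    · intro u hu
      have hus : u ∈ s := Finset.mem_of_mem_erase hu
      have hne : u ≠ m s := Finset.ne_of_mem_erase hu
      rw [hN]
      simp only [Finset.mem_filter, Finset.mem_univ, true_and]
      refine ⟨hs.1 hms hus hne.symm, ?_⟩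
      exact lt_of_le_of_ne (hle s hsne u hus) (fun h => hne (hord h.symm))
    · rw [Finset.card_erase_of_mem hms, hs.2]
  have hinj : Set.InjOn (fun s => (m s, s.erase (m s))) (G.cliqueFinset k) := by
    intro s hs t ht h
    rw [Finset.mem_coe] at hs ht
    have hsne : s.Nonempty := by
      rw [SimpleGraph.mem_cliqueFinset_iff] at hs
      rw [← Finset.card_pos, hs.2]; omega
    have htne : t.Nonempty := by
      rw [SimpleGraph.mem_cliqueFinset_iff] at ht
      rw [← Finset.card_pos, ht.2]; omega
    have h1 : m s = m t := congrArg Prod.fst h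
    have h2 : s.erase (m s) = t.erase (m t) := congrArg Prod.snd h
    calc s = insert (m s) (s.erase (m s)) := (Finset.insert_erase (hmem s hsne)).symm
      _ = insert (m t) (t.erase (m t)) := by rw [h2, h1]
      _ = t := Finset.insert_erase (hmem t htne)
  have hcard : (G.cliqueFinset k).card ≤ T.card :=
    Finset.card_le_card_of_injOn _ hmap hinj
  refine hcard.trans ?_
  calc T.card ≤ ∑ v : V, (((N v).powersetCard (k-1)).image (fun t => (v, t))).card :=
        Finset.card_biUnion_le
    _ ≤ ∑ v : V, Nat.choose c (k-1) := by
        refine Finset.sum_le_sum fun v _ => ?_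
        calc (((N v).powersetCard (k-1)).image (fun t => (v, t))).card
            ≤ ((N v).powersetCard (k-1)).card := Finset.card_image_le
          _ = Nat.choose (N v).card (k-1) := Finset.card_powersetCard _ _
          _ ≤ Nat.choose c (k-1) := Nat.choose_le_choose _ (hdeg v)
    _ = n * Nat.choose c (k-1) := by
        rw [Finset.sum_const, Finset.card_univ, hn, smul_eq_mul]
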